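/- arXiv:1605.08861 — 3 statements merged into one kernel-verified Lean document; each statement's English description precedes it below -/
import Mathlib

section
/- Itô integral along a continuous bounded-variation path equals the Stieltjes integral: Let ξ:[0,T]×D([0,T],U)→ℝ^d be an admissible functional integrand and let B∈CBV([0,T],U). Then the pathwise Itô integral ∫_0^T ξ(s,B) dB(s) = lim_{n→∞} Σ_{s∈T_n} ξ(s,B^{n,s−})·(B(s')−B(s)) exists and is equal to the Lebesgue–Stieltjes integral of s↦ξ(s,B) with respect to dB(s). -/
open Filter Set MeasureTheory

noncomputable section

/-- A `d`-dimensional path, i.e. a function from time to `ℝ^d`. -/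
abbrev FPath (d : ℕ) := ℝ → (Fin d → ℝ)

/-- A non-anticipative functional type: depends on time, a `d`-dimensional path and an
`m`-dimensional (bounded-variation) path. -/
abbrev Fnl (d m : ℕ) := ℝ → FPath d → FPath m → ℝ

/-- The path `X` stopped at time `t`: `X^t(s) = X(t ∧ s)`. -/
def stopped {d : ℕ} (X : FPath d) (t : ℝ) : FPath d := fun s => X (min t s)

/-- Supremum distance `‖X - Y‖_∞ = sup_{u ∈ [0,T]} |X(u) - Y(u)|`. -/
noncomputable def supDist {d : ℕ} (T : ℝ) (X Y : FPath d) : ℝ :=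
  ⨆ u : Set.Icc (0:ℝ) T, ‖X u.1 - Y u.1‖

/-- `X ∈ D([0,T],U)`: càdlàg on `[0,T]` with values in `U` and left limits in `U`. -/
def IsCadlag {d : ℕ} (T : ℝ) (U : Set (Fin d → ℝ)) (X : FPath d) : Prop :=
  (∀ t ∈ Set.Icc (0:ℝ) T, X t ∈ U) ∧
  (∀ t ∈ Set.Ico (0:ℝ) T, Tendsto X (nhdsWithin t (Set.Ioi t)) (nhds (X t))) ∧
  (∀ t ∈ Set.Ioc (0:ℝ) T, ∃ L ∈ U, Tendsto X (nhdsWithin t (Set.Iio t)) (nhds L))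

/-- `A ∈ CBV([0,T],S)`: continuous, `S`-valued, components of bounded variation on `[0,T]`. -/
def IsCBV {m : ℕ} (T : ℝ) (S : Set (Fin m → ℝ)) (A : FPath m) : Prop :=
  (∀ t ∈ Set.Icc (0:ℝ) T, A t ∈ S) ∧ ContinuousOn A (Set.Icc 0 T) ∧
  (∀ i, BoundedVariationOn (fun t => A t i) (Set.Icc 0 T))

/-- `X ∈ C([0,T],U)`: a continuous path (in particular càdlàg). -/
def IsContPath {d : ℕ} (T : ℝ) (U : Set (Fin d → ℝ)) (X : FPath d) : Prop :=
  IsCadlag T U X ∧ ContinuousOn X (Set.Icc 0 T)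

/-- `I` is the Lebesgue–Stieltjes integral `∫_s^t g(r) dA(r)` of `g` against the (continuous,
bounded-variation) integrator `A`, via a Jordan-type decomposition `A = P - N` into monotone
right-continuous parts. -/
def IsLSIntegral (g : ℝ → ℝ) (A : ℝ → ℝ) (s t : ℝ) (I : ℝ) : Prop :=
  ∃ P N : StieltjesFunction ℝ,
    (∀ r ∈ Set.Icc s t, A r = P r - N r) ∧
    IntervalIntegrable g P.measure s t ∧ IntervalIntegrable g N.measure s t ∧
    I = (∫ r in s..t, g r ∂P.measure) - (∫ r in s..t, g r ∂N.measure)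

/-- Non-anticipativity: `F(t,X,A) = F(t,X^t,A^t)`. -/
def NonAnticipative {d m : ℕ} (T : ℝ) (U : Set (Fin d → ℝ)) (S : Set (Fin m → ℝ))
    (F : Fnl d m) : Prop :=
  ∀ t ∈ Set.Icc (0:ℝ) T, ∀ X, IsCadlag T U X → ∀ A, IsCBV T S A →
    F t X A = F t (stopped X t) (stopped A t)

/-- Boundedness-preserving functional. -/
def BoundednessPreserving {d m : ℕ} (T : ℝ) (U : Set (Fin d → ℝ)) (S : Set (Fin m → ℝ))
    (F : Fnl d m) : Prop :=
  ∀ A, IsCBV T S A → ∀ K : Set (Fin d → ℝ), K ⊆ U → IsCompact K →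
    ∃ C : ℝ, ∀ t ∈ Set.Icc (0:ℝ) T, ∀ X, IsCadlag T K X → |F t X A| ≤ C

/-- Continuity at fixed times. -/
def ContAtFixedTimes {d m : ℕ} (T : ℝ) (U : Set (Fin d → ℝ)) (S : Set (Fin m → ℝ))
    (F : Fnl d m) : Prop :=
  ∀ ε > (0:ℝ), ∀ t ∈ Set.Icc (0:ℝ) T, ∀ X, IsCadlag T U X → ∀ A, IsCBV T S A →
    ∃ η > (0:ℝ), ∀ Y, IsCadlag T U Y → supDist T (stopped X t) (stopped Y t) < η →
      |F t X A - F t Y A| < ε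

/-- Left-continuity of a non-anticipative functional. -/
def LeftCont {d m : ℕ} (T : ℝ) (U : Set (Fin d → ℝ)) (S : Set (Fin m → ℝ))
    (F : Fnl d m) : Prop :=
  ∀ t ∈ Set.Ioc (0:ℝ) T, ∀ ε > (0:ℝ), ∀ X, IsCadlag T U X → ∀ A, IsCBV T S A →
    ∃ η > (0:ℝ), ∀ h ∈ Set.Ico (0:ℝ) η, ∀ Y, IsCadlag T U Y →
      supDist T (stopped X t) (stopped Y (t - h)) < η →
      |F t X A - F (t - h) Y A| < ε

/-- Continuity in `X` locally uniformly in `t`. -/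
def ContInXLocUnifT {d m : ℕ} (T : ℝ) (U : Set (Fin d → ℝ)) (S : Set (Fin m → ℝ))
    (F : Fnl d m) : Prop :=
  ∀ ε > (0:ℝ), ∀ t ∈ Set.Icc (0:ℝ) T, ∀ X, IsCadlag T U X → ∀ A, IsCBV T S A →
    ∃ η > (0:ℝ), ∀ u ∈ Set.Icc (0:ℝ) T, ∀ Y, IsCadlag T U Y →
      supDist T X Y < η → |t - u| < η → |F u X A - F u Y A| < ε

/-- Vertical perturbation `X + v·1_{[t,∞)}`. -/
def vertPerturb {d : ℕ} (t : ℝ) (X : FPath d) (v : Fin d → ℝ) : FPath d :=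
  fun s => if t ≤ s then X s + v else X s

/-- Vertical differentiability of `F` at `(t,X,A)`. -/
def VertDiffAt {d m : ℕ} (F : Fnl d m) (t : ℝ) (X : FPath d) (A : FPath m) : Prop :=
  DifferentiableAt ℝ (fun v : Fin d → ℝ => F t (vertPerturb t X v) A) 0

/-- The vertical derivative `∇_X F(t,X,A)` (components `∂_i F`). -/
noncomputable def vertD {d m : ℕ} (F : Fnl d m) (t : ℝ) (X : FPath d) (A : FPath m) :
    Fin d → ℝ :=
  fun i => fderiv ℝ (fun v : Fin d → ℝ => F t (vertPerturb t X v) A) 0 (Pi.single i 1)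

/-- Second vertical derivatives `∂_{ij}F = ∂_i(∂_j F)`. -/
noncomputable def vertD2 {d m : ℕ} (F : Fnl d m) (t : ℝ) (X : FPath d) (A : FPath m) :
    Fin d → Fin d → ℝ :=
  fun i j => vertD (fun u Y B => vertD F u Y B j) t X A i

/-- The time-augmented bounded-variation path `(A_0, A_1, …, A_m)` with `A_0(r) = r`. -/
def timeAug {m : ℕ} (A : FPath m) : ℝ → Fin (m+1) → ℝ := fun r => Fin.cons r (A r)

/-- `F` is horizontally differentiable with horizontal derivative `HD = (𝒟_0F, …, 𝒟_mF)`. -/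
def HasHorizDeriv {d m : ℕ} (T : ℝ) (U : Set (Fin d → ℝ)) (S : Set (Fin m → ℝ))
    (F : Fnl d m) (HD : Fin (m+1) → Fnl d m) : Prop :=
  (∀ i, NonAnticipative T U S (HD i)) ∧
  (∀ i, BoundednessPreserving T U S (HD i)) ∧
  (∀ s t : ℝ, 0 ≤ s → s < t → t ≤ T → ∀ X, IsCadlag T U X → ∀ A, IsCBV T S A →
    (∀ i, Measurable fun r : Set.Icc s t => HD i r.1 (stopped X s) A) ∧
    ∃ I : Fin (m+1) → ℝ,
      (∀ i, IsLSIntegral (fun r => HD i r (stopped X s) A) (fun r => timeAug A r i) s t (I i)) ∧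
      F t (stopped X s) A - F s (stopped X s) A = ∑ i, I i)

/-- The class `ℂ^{1,2}_b(U,S)`. -/
structure C12b {d m : ℕ} (T : ℝ) (U : Set (Fin d → ℝ)) (S : Set (Fin m → ℝ))
    (F : Fnl d m) : Prop where
  nonanticip : NonAnticipative T U S F
  leftCont : LeftCont T U S F
  horiz : ∃ HD : Fin (m+1) → Fnl d m,
    HasHorizDeriv T U S F HD ∧ ∀ i, ContAtFixedTimes T U S (HD i)
  vdiff : ∀ t ∈ Set.Icc (0:ℝ) T, ∀ X, IsCadlag T U X → ∀ A, IsCBV T S A → VertDiffAt F t X A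
  vdiff2 : ∀ j : Fin d, ∀ t ∈ Set.Icc (0:ℝ) T, ∀ X, IsCadlag T U X → ∀ A, IsCBV T S A →
    VertDiffAt (fun u Y B => vertD F u Y B j) t X A
  vd_leftCont : ∀ i, LeftCont T U S (fun u Y B => vertD F u Y B i)
  vd_bdd : ∀ i, BoundednessPreserving T U S (fun u Y B => vertD F u Y B i)
  vd2_leftCont : ∀ i j, LeftCont T U S (fun u Y B => vertD2 F u Y B i j)
  vd2_bdd : ∀ i j, BoundednessPreserving T U S (fun u Y B => vertD2 F u Y B i j)

/-- The class `ℂ^{1,2}_c(U,S)`. -/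
def C12c {d m : ℕ} (T : ℝ) (U : Set (Fin d → ℝ)) (S : Set (Fin m → ℝ)) (F : Fnl d m) : Prop :=
  C12b T U S F ∧ ContInXLocUnifT T U S F ∧ BoundednessPreserving T U S F

/-- The successor `s'` of `s` in the partition `P` of `[0,T]`. -/
noncomputable def nextPt (P : Finset ℝ) (T s : ℝ) : ℝ :=
  if h : (P.filter (fun u => s < u)).Nonempty then (P.filter (fun u => s < u)).min' h else T

/-- The largest partition point `≤ t`. -/
noncomputable def prevPt (P : Finset ℝ) (t : ℝ) : ℝ :=
  if h : (P.filter (fun u => u ≤ t)).Nonempty then (P.filter (fun u => u ≤ t)).max' h else 0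

/-- The step-path approximation `X^n(t) = Σ_{s ∈ T_n} X(s')1_{[s,s')}(t) + X(T)1_{{T}}(t)`. -/
noncomputable def stepApprox {d : ℕ} (P : Finset ℝ) (T : ℝ) (X : FPath d) : FPath d :=
  fun t => if t = T then X T else X (nextPt P T (prevPt P t))

/-- `X^{n,s-} = lim_{r ↑ s} (X^n)^r`: equals `X^n` before `s` and `X(s)` from `s` on. -/
noncomputable def stepStopApprox {d : ℕ} (P : Finset ℝ) (T : ℝ) (X : FPath d) (s : ℝ) : FPath d :=
  fun u => if u < s then stepApprox P T X u else X s

/-- A refining sequence of partitions of `[0,T]`: nested, containing `0` and `T`,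
with mesh tending to zero. -/
structure RefiningSeq (T : ℝ) where
  part : ℕ → Finset ℝ
  subset_Icc : ∀ n, (part n : Set ℝ) ⊆ Set.Icc (0:ℝ) T
  zero_mem : ∀ n, (0:ℝ) ∈ part n
  endpoint_mem : ∀ n, T ∈ part n
  nested : ∀ n, part n ⊆ part (n+1)
  mesh_to_zero : ∀ ε > (0:ℝ), ∃ N, ∀ n ≥ N, ∀ s ∈ part n, nextPt (part n) T s - s < ε

/-- The approximating Itô–Riemann sum `Σ_{s ∈ P, s ≤ t} ξ(s, X^{n,s-})·(X(s') - X(s))`. -/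
noncomputable def itoSum {d : ℕ} (P : Finset ℝ) (T : ℝ) (ξ : ℝ → FPath d → Fin d → ℝ)
    (X : FPath d) (t : ℝ) : ℝ :=
  ∑ s ∈ P.filter (fun u => u ≤ t),
    ∑ i, ξ s (stepStopApprox P T X s) i * (X (nextPt P T s) i - X s i)

/-- `I = ∫_0^t ξ(s,X) dX(s)`, the pathwise Itô integral along the refining sequence `R`. -/
def IsItoIntegral {d : ℕ} {T : ℝ} (R : RefiningSeq T) (ξ : ℝ → FPath d → Fin d → ℝ)
    (X : FPath d) (t : ℝ) (I : ℝ) : Prop :=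
  Tendsto (fun n => itoSum (R.part n) T ξ X t) atTop (nhds I)

/-- A one-dimensional path `Z` admits the continuous quadratic variation `Q` along `R`. -/
def HasQV1 {T : ℝ} (R : RefiningSeq T) (Z : ℝ → ℝ) (Q : ℝ → ℝ) : Prop :=
  Q 0 = 0 ∧ ContinuousOn Q (Set.Icc 0 T) ∧
  ∀ t ∈ Set.Ioc (0:ℝ) T,
    Tendsto (fun n => ∑ s ∈ (R.part n).filter (fun u => u ≤ t),
      (Z (nextPt (R.part n) T s) - Z s)^2) atTop (nhds (Q t))

/-- `Q = [Z_i, Z_j]` is the covariation of `Z_i` and `Z_j` along `R`, via polarization. -/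
def IsCovar {T : ℝ} (R : RefiningSeq T) (Zi Zj : ℝ → ℝ) (Q : ℝ → ℝ) : Prop :=
  ∃ Qi Qj Qij : ℝ → ℝ, HasQV1 R Zi Qi ∧ HasQV1 R Zj Qj ∧
    HasQV1 R (fun s => Zi s + Zj s) Qij ∧
    ∀ t ∈ Set.Icc (0:ℝ) T, Q t = (Qij t - Qi t - Qj t) / 2

/-- A `d`-dimensional path admits the continuous quadratic variation along `R`. -/
def HasContQV {d : ℕ} {T : ℝ} (R : RefiningSeq T) (X : FPath d) : Prop :=
  ∀ i j : Fin d, ∃ Q, HasQV1 R (fun s => X s i + X s j) Q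

/-- An admissible functional integrand: `ξ(t,X) = ∇_X F(t,X,A)` for some
`F ∈ ℂ^{1,2}_c(U,S)` and `A ∈ CBV([0,T],S)`. -/
def AdmissibleIntegrand {d : ℕ} (T : ℝ) (U : Set (Fin d → ℝ))
    (ξ : ℝ → FPath d → Fin d → ℝ) : Prop :=
  ∃ (m : ℕ) (S : Set (Fin m → ℝ)) (A : FPath m) (F : Fnl d m),
    IsOpen S ∧ IsCBV T S A ∧ C12c T U S F ∧
    ∀ t ∈ Set.Icc (0:ℝ) T, ∀ X, IsCadlag T U X → ξ t X = vertD F t X A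

/-- The set `S × W ⊆ ℝ^{m+p}`. -/
def pairSet {m p : ℕ} (S : Set (Fin m → ℝ)) (W : Set (Fin p → ℝ)) : Set (Fin (m+p) → ℝ) :=
  {v | (fun i => v (Fin.castAdd p i)) ∈ S ∧ (fun j => v (Fin.natAdd m j)) ∈ W}

/-- First component of a combined path `(A,B)`. -/
def fstPath {m p : ℕ} (AB : FPath (m+p)) : FPath m := fun r i => AB r (Fin.castAdd p i)

/-- Second component of a combined path `(A,B)`. -/
def sndPath {m p : ℕ} (AB : FPath (m+p)) : FPath p := fun r j => AB r (Fin.natAdd m j)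

end

/-!
Along a continuous path of bounded variation the Itô sum `Σ ξ(s, B^{n,s-}) · (B(s') - B(s))` is
the Lebesgue–Stieltjes integral against `dB` of the step function equal to `ξ(s, B^{n,s-})` on
each `(s, s']`. As `B` is uniformly continuous, `(B^{n,s-})^s` is uniformly close to `B^r` for
`r ∈ (s, s']` once the mesh is small, so left-continuity of `∇_X F` makes these step functions
converge pointwise on `(0, T]` to `r ↦ ξ(r, B)`. Boundedness preservation on the compact set
`B([0, T])` bounds them uniformly, and dominated convergence against the two monotone parts of
each coordinate of `B` concludes.
-/

open Topology

section PartitionPoints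

variable {P : Finset ℝ} {T : ℝ}

theorem RefiningSeq.nonneg (R : RefiningSeq T) : 0 ≤ T :=
  (R.subset_Icc 0 (R.zero_mem 0)).2

theorem nextPt_mem_Icc (hP : ↑P ⊆ Icc (0:ℝ) T) (hT : 0 ≤ T) (s : ℝ) :
    nextPt P T s ∈ Icc (0:ℝ) T := by
  unfold nextPt
  split_ifs with h
  · exact hP (Finset.mem_filter.1 (Finset.min'_mem _ h)).1
  · exact ⟨hT, le_rfl⟩

theorem le_nextPt {s : ℝ} (hsT : s ≤ T) : s ≤ nextPt P T s := by
  unfold nextPt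
  split_ifs with h
  · exact (Finset.mem_filter.1 (Finset.min'_mem _ h)).2.le
  · exact hsT

theorem nextPt_le {s u : ℝ} (hu : u ∈ P) (hsu : s < u) : nextPt P T s ≤ u := by
  have hmem : u ∈ P.filter (fun v => s < v) := Finset.mem_filter.2 ⟨hu, hsu⟩
  rw [nextPt, dif_pos ⟨u, hmem⟩]
  exact Finset.min'_le _ _ hmem

theorem prevPt_mem (h0 : (0:ℝ) ∈ P) {t : ℝ} (ht : 0 ≤ t) : prevPt P t ∈ P := by
  have hne : (P.filter (fun v => v ≤ t)).Nonempty := ⟨0, Finset.mem_filter.2 ⟨h0, ht⟩⟩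
  rw [prevPt, dif_pos hne]
  exact (Finset.mem_filter.1 (Finset.max'_mem _ hne)).1

theorem prevPt_le (h0 : (0:ℝ) ∈ P) {t : ℝ} (ht : 0 ≤ t) : prevPt P t ≤ t := by
  have hne : (P.filter (fun v => v ≤ t)).Nonempty := ⟨0, Finset.mem_filter.2 ⟨h0, ht⟩⟩
  rw [prevPt, dif_pos hne]
  exact (Finset.mem_filter.1 (Finset.max'_mem _ hne)).2

theorem le_prevPt {p t : ℝ} (hp : p ∈ P) (hpt : p ≤ t) : p ≤ prevPt P t := by
  have hmem : p ∈ P.filter (fun v => v ≤ t) := Finset.mem_filter.2 ⟨hp, hpt⟩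
  rw [prevPt, dif_pos ⟨p, hmem⟩]
  exact Finset.le_max' _ _ hmem

theorem lt_nextPt_prevPt {t : ℝ} (htT : t < T) : t < nextPt P T (prevPt P t) := by
  unfold nextPt
  split_ifs with h
  · obtain ⟨hmem, hlt⟩ := Finset.mem_filter.1 (Finset.min'_mem _ h)
    by_contra! hle
    exact (le_prevPt hmem hle).not_gt hlt
  · exact htT

theorem exists_mem_mem_Ioc_nextPt (h0 : (0:ℝ) ∈ P) {r : ℝ} (hr : r ∈ Ioc (0:ℝ) T) :
    ∃ s ∈ P, r ∈ Ioc s (nextPt P T s) := by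
  have hne : (P.filter (fun v => v < r)).Nonempty := ⟨0, Finset.mem_filter.2 ⟨h0, hr.1⟩⟩
  obtain ⟨hs, hsr⟩ := Finset.mem_filter.1 (Finset.max'_mem _ hne)
  refine ⟨_, hs, hsr, ?_⟩
  unfold nextPt
  split_ifs with h
  · obtain ⟨hmem, hlt⟩ := Finset.mem_filter.1 (Finset.min'_mem _ h)
    by_contra! hle
    exact (Finset.le_max' _ _ (Finset.mem_filter.2 ⟨hmem, hle⟩)).not_gt hlt
  · exact hr.2

theorem filter_le_eventuallyEq_right (P : Finset ℝ) (t : ℝ) :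
    (fun u => P.filter (· ≤ u)) =ᶠ[𝓝[>] t] fun _ => P.filter (· ≤ t) := by
  have : ∀ᶠ u in 𝓝[>] t, ∀ p ∈ P, (p ≤ u ↔ p ≤ t) := by
    refine (eventually_all_finset P).2 fun p _ => ?_
    by_cases hpt : p ≤ t
    · filter_upwards [self_mem_nhdsWithin] with u (hu : t < u)
      exact iff_of_true (hpt.trans hu.le) hpt
    · filter_upwards [nhdsWithin_le_nhds (Iio_mem_nhds (not_le.1 hpt))] with u (hu : u < p)
      exact iff_of_false hu.not_ge hpt
  filter_upwards [this] with u hu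
  exact Finset.filter_congr hu

theorem filter_le_eventuallyEq_left (P : Finset ℝ) (t : ℝ) :
    (fun u => P.filter (· ≤ u)) =ᶠ[𝓝[<] t] fun _ => P.filter (· < t) := by
  have : ∀ᶠ u in 𝓝[<] t, ∀ p ∈ P, (p ≤ u ↔ p < t) := by
    refine (eventually_all_finset P).2 fun p _ => ?_
    by_cases hpt : p < t
    · filter_upwards [nhdsWithin_le_nhds (Ioi_mem_nhds hpt)] with u (hu : p < u)
      exact iff_of_true hu.le hpt
    · filter_upwards [self_mem_nhdsWithin] with u (hu : u < t)
      exact iff_of_false (fun hpu => hpt (hpu.trans_lt hu)) hpt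
  filter_upwards [this] with u hu
  exact Finset.filter_congr hu

theorem prevPt_eq_comp_filter (P : Finset ℝ) :
    prevPt P = (fun F : Finset ℝ => if h : F.Nonempty then F.max' h else 0) ∘
      fun u => P.filter (· ≤ u) :=
  rfl

theorem prevPt_eventuallyEq_right (P : Finset ℝ) (t : ℝ) :
    prevPt P =ᶠ[𝓝[>] t] fun _ => prevPt P t := by
  rw [prevPt_eq_comp_filter]
  exact (filter_le_eventuallyEq_right P t).fun_comp _

theorem eventuallyConst_prevPt_left (P : Finset ℝ) (t : ℝ) :
    EventuallyConst (prevPt P) (𝓝[<] t) := by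
  rw [prevPt_eq_comp_filter]
  exact ((filter_le_eventuallyEq_left P t).eventuallyConst_iff.2 (.const _)).comp _

end PartitionPoints

section StepPaths

variable {d : ℕ} {P : Finset ℝ} {T : ℝ} {K : Set (Fin d → ℝ)} {B : FPath d} {s : ℝ}

theorem stepStopApprox_of_lt (hsT : s ≤ T) {u : ℝ} (hus : u < s) :
    stepStopApprox P T B s u = B (nextPt P T (prevPt P u)) := by
  rw [stepStopApprox, if_pos hus, stepApprox, if_neg (hus.trans_le hsT).ne]

theorem stepStopApprox_of_le {u : ℝ} (hsu : s ≤ u) : stepStopApprox P T B s u = B s := by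
  rw [stepStopApprox, if_neg hsu.not_gt]

theorem stepStopApprox_mem (hP : ↑P ⊆ Icc (0:ℝ) T) (hT : 0 ≤ T)
    (hBK : ∀ t ∈ Icc (0:ℝ) T, B t ∈ K) (hs : s ∈ P) (u : ℝ) :
    stepStopApprox P T B s u ∈ K := by
  unfold stepStopApprox stepApprox
  split_ifs
  · exact hBK T ⟨hT, le_rfl⟩
  · exact hBK _ (nextPt_mem_Icc hP hT _)
  · exact hBK s (hP hs)

theorem isCadlag_of_eventuallyConst {X : FPath d} (hXK : ∀ t ∈ Icc (0:ℝ) T, X t ∈ K)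
    (hright : ∀ t ∈ Ico (0:ℝ) T, X =ᶠ[𝓝[>] t] fun _ => X t)
    (hleft : ∀ t ∈ Ioc (0:ℝ) T, EventuallyConst X (𝓝[<] t)) :
    IsCadlag T K X := by
  refine ⟨hXK, fun t ht => tendsto_const_nhds.congr' (hright t ht).symm, fun t ht => ?_⟩
  obtain ⟨L, hL⟩ := (hleft t ht).eventuallyEq_const
  have hIcc : ∀ᶠ u in 𝓝[<] t, u ∈ Icc (0:ℝ) T :=
    mem_of_superset (Ioo_mem_nhdsLT ht.1) fun u hu => ⟨hu.1.le, hu.2.le.trans ht.2⟩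
  obtain ⟨u, hu, hXu : X u = L⟩ := (hIcc.and hL).exists
  exact ⟨L, hXu ▸ hXK u hu, tendsto_const_nhds.congr' hL.symm⟩

theorem isCadlag_stepStopApprox (hP : ↑P ⊆ Icc (0:ℝ) T) (hT : 0 ≤ T)
    (hBK : ∀ t ∈ Icc (0:ℝ) T, B t ∈ K) (hs : s ∈ P) :
    IsCadlag T K (stepStopApprox P T B s) := by
  have hsT : s ≤ T := (hP hs).2
  refine isCadlag_of_eventuallyConst (fun u _ => stepStopApprox_mem hP hT hBK hs u)
    (fun t _ => ?_) (fun t _ => ?_)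
  · rcases lt_or_ge t s with hts | hst
    · filter_upwards [prevPt_eventuallyEq_right P t,
        nhdsWithin_le_nhds (Iio_mem_nhds hts)] with u hu (hus : u < s)
      rw [stepStopApprox_of_lt hsT hus, stepStopApprox_of_lt hsT hts, hu]
    · filter_upwards [self_mem_nhdsWithin] with u (hu : t < u)
      rw [stepStopApprox_of_le (hst.trans hu.le), stepStopApprox_of_le hst]
  · rcases lt_or_ge s t with hst | hts
    · refine (EventuallyConst.const (B s)).congr ?_
      filter_upwards [nhdsWithin_le_nhds (Ioi_mem_nhds hst)] with u (hu : s < u)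
      rw [stepStopApprox_of_le hu.le]
    · refine ((eventuallyConst_prevPt_left P t).comp (B ∘ nextPt P T)).congr ?_
      filter_upwards [self_mem_nhdsWithin] with u (hu : u < t)
      rw [stepStopApprox_of_lt hsT (hu.trans_le hts)]
      rfl

theorem isCadlag_of_continuousOn (hBK : ∀ t ∈ Icc (0:ℝ) T, B t ∈ K)
    (hB : ContinuousOn B (Icc 0 T)) : IsCadlag T K B := by
  refine ⟨hBK, fun t ht => ?_, fun t ht => ⟨B t, hBK t ⟨ht.1.le, ht.2⟩, ?_⟩⟩
  · have h := (hB t ⟨ht.1, ht.2.le⟩).mono (Ioc_subset_Icc_self.trans (Icc_subset_Icc_left ht.1))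
    rwa [ContinuousWithinAt, nhdsWithin_Ioc_eq_nhdsGT ht.2] at h
  · have h := (hB t ⟨ht.1.le, ht.2⟩).mono (Ico_subset_Icc_self.trans (Icc_subset_Icc_right ht.2))
    rwa [ContinuousWithinAt, nhdsWithin_Ico_eq_nhdsLT ht.1] at h

theorem supDist_stopped_stepStopApprox_le (hP : ↑P ⊆ Icc (0:ℝ) T) (h0 : (0:ℝ) ∈ P)
    {δ ε : ℝ} (hε : 0 ≤ ε)
    (hB : ∀ x ∈ Icc (0:ℝ) T, ∀ y ∈ Icc (0:ℝ) T, dist x y < δ → dist (B x) (B y) < ε)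
    (hmesh : ∀ s ∈ P, nextPt P T s - s < δ) (hs : s ∈ P) {r : ℝ}
    (hr : r ∈ Ioc s (nextPt P T s)) (hrT : r ≤ T) :
    supDist T (stopped B r) (stopped (stepStopApprox P T B s) s) ≤ ε := by
  refine Real.iSup_le (fun ⟨u, hu⟩ => ?_) hε
  simp only [stopped, ← dist_eq_norm]
  have hsI : s ∈ Icc (0:ℝ) T := hP hs
  rcases lt_or_ge u s with hus | hsu
  · -- before `s`, the step path shows the value of `B` at the partition point following `u`
    rw [min_eq_right (hus.trans hr.1).le, min_eq_right hus.le, stepStopApprox_of_lt hsI.2 hus]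
    have hnext := lt_nextPt_prevPt (P := P) (hus.trans_le hsI.2)
    refine (hB u hu _ (nextPt_mem_Icc hP (hu.1.trans hu.2) _) ?_).le
    rw [Real.dist_eq, abs_sub_lt_iff]
    constructor <;> linarith [hmesh _ (prevPt_mem h0 hu.1), prevPt_le (P := P) h0 hu.1]
  · rw [min_eq_left hsu, stepStopApprox_of_le le_rfl]
    have hsr : s ≤ min r u := le_min hr.1.le hsu
    refine (hB _ ⟨hsI.1.trans hsr, (min_le_left _ _).trans hrT⟩ s hsI ?_).le
    rw [Real.dist_eq, abs_sub_lt_iff]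
    constructor <;> linarith [min_le_left r u, hmesh s hs, hr.2]

end StepPaths

noncomputable def stepFn (P : Finset ℝ) (T : ℝ) (c : ℝ → ℝ) (r : ℝ) : ℝ :=
  ∑ s ∈ P, (Ioc s (nextPt P T s)).indicator (fun _ => c s) r

section StepFunctions

variable {P : Finset ℝ} {T : ℝ}

theorem stepFn_congr {c c' : ℝ → ℝ} (h : ∀ s ∈ P, c s = c' s) : stepFn P T c = stepFn P T c' :=
  funext fun _ => Finset.sum_congr rfl fun s hs => by rw [h s hs]

theorem stepFn_eq_of_mem (c : ℝ → ℝ) {s r : ℝ} (hs : s ∈ P) (hr : r ∈ Ioc s (nextPt P T s)) :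
    stepFn P T c r = c s := by
  rw [stepFn, Finset.sum_eq_single_of_mem s hs fun s₂ hs₂ hne => ?_, indicator_of_mem hr]
  refine indicator_of_notMem (fun hr₂ => ?_) _
  rcases hne.lt_or_gt with h | h
  · linarith [nextPt_le (T := T) hs h, hr.1, hr₂.2]
  · linarith [nextPt_le (T := T) hs₂ h, hr₂.1, hr.2]

theorem abs_stepFn_le {c : ℝ → ℝ} {C : ℝ} (hC : ∀ s ∈ P, |c s| ≤ C) (hC0 : 0 ≤ C) (r : ℝ) :
    |stepFn P T c r| ≤ C := by
  by_cases h : ∃ s ∈ P, r ∈ Ioc s (nextPt P T s)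
  · obtain ⟨s, hs, hr⟩ := h
    rw [stepFn_eq_of_mem c hs hr]
    exact hC s hs
  · push Not at h
    rwa [stepFn, Finset.sum_eq_zero fun s hs => indicator_of_notMem (h s hs) _, abs_zero]

theorem measurable_stepFn (c : ℝ → ℝ) : Measurable (stepFn P T c) :=
  Finset.measurable_sum _ fun _ _ => measurable_const.indicator measurableSet_Ioc

theorem integral_stepFn (φ : StieltjesFunction ℝ) (hP : ↑P ⊆ Icc (0:ℝ) T) (hT : 0 ≤ T)
    (c : ℝ → ℝ) :
    ∫ r in Ioc (0:ℝ) T, stepFn P T c r ∂φ.measure = ∑ s ∈ P, c s * (φ (nextPt P T s) - φ s) := by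
  have hint : ∀ s ∈ P, Integrable ((Ioc s (nextPt P T s)).indicator fun _ => c s)
      (φ.measure.restrict (Ioc 0 T)) := fun s _ =>
    (integrable_indicator_iff measurableSet_Ioc).2 <| (integrableOn_const_iff enorm_ne_top).2 <|
      Or.inr <| (Measure.restrict_apply_le _ _).trans_lt <| by
        simp [StieltjesFunction.measure_Ioc]
  simp only [stepFn]
  rw [integral_finsetSum P hint]
  refine Finset.sum_congr rfl fun s hs => ?_
  have hsub : Ioc s (nextPt P T s) ⊆ Ioc (0:ℝ) T :=
    Ioc_subset_Ioc (hP hs).1 (nextPt_mem_Icc hP hT s).2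
  rw [integral_indicator measurableSet_Ioc, Measure.restrict_restrict measurableSet_Ioc,
    inter_eq_self_of_subset_left hsub, setIntegral_const, smul_eq_mul, measureReal_def,
    StieltjesFunction.measure_Ioc,
    ENNReal.toReal_ofReal (sub_nonneg.2 (φ.mono (le_nextPt (hP hs).2))), mul_comm]

end StepFunctions

theorem integrableOn_and_tendsto_setIntegral_of_bounded {α : Type*} [MeasurableSpace α]
    {μ : Measure α} {s : Set α} (hs : MeasurableSet s) (hμs : μ s ≠ ⊤)
    {G : ℕ → α → ℝ} {g : α → ℝ} {C : ℝ} (hGm : ∀ n, AEStronglyMeasurable (G n) (μ.restrict s))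
    (hGC : ∀ n x, |G n x| ≤ C) (hG : ∀ x ∈ s, Tendsto (fun n => G n x) atTop (𝓝 (g x))) :
    IntegrableOn g s μ ∧
      Tendsto (fun n => ∫ x in s, G n x ∂μ) atTop (𝓝 (∫ x in s, g x ∂μ)) := by
  have : IsFiniteMeasure (μ.restrict s) := isFiniteMeasure_restrict.2 hμs
  have hG' : ∀ᵐ x ∂μ.restrict s, Tendsto (fun n => G n x) atTop (𝓝 (g x)) :=
    (ae_restrict_mem hs).mono hG
  refine ⟨(integrable_const C).mono' (aestronglyMeasurable_of_tendsto_ae atTop hGm hG')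
    (hG'.mono fun x hx => le_of_tendsto' hx.norm fun n => hGC n x), ?_⟩
  exact tendsto_integral_of_dominated_convergence _ hGm (integrable_const C)
    (fun n => .of_forall (hGC n)) hG'

theorem exists_stieltjesFunction_sub_eq {T : ℝ} (hT : 0 ≤ T) {f : ℝ → ℝ}
    (hf : ContinuousOn f (Icc 0 T)) (hfv : BoundedVariationOn f (Icc 0 T)) :
    ∃ φ ψ : StieltjesFunction ℝ, ∀ r ∈ Icc (0:ℝ) T, f r = φ r - ψ r := by
  obtain ⟨p, q, hp, hq, hpq⟩ := hfv.locallyBoundedVariationOn.exists_monotoneOn_sub_monotoneOn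
  -- Extend `p`, `q` constantly outside `[0, T]` and take right limits; the difference of the
  -- right limits is still `f` on `[0, T]` because `f = p - q` is continuous there.
  let cl : ℝ → Icc (0:ℝ) T := projIcc 0 T hT
  have hpm : Monotone (p ∘ (↑) ∘ cl) := fun x y h =>
    hp (cl x).2 (cl y).2 (monotone_projIcc hT h)
  have hqm : Monotone (q ∘ (↑) ∘ cl) := fun x y h =>
    hq (cl x).2 (cl y).2 (monotone_projIcc hT h)
  refine ⟨hpm.stieltjesFunction, hqm.stieltjesFunction, fun r hr => ?_⟩
  have hlim : Tendsto (f ∘ (↑) ∘ cl) (𝓝[>] r)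
      (𝓝 (hpm.stieltjesFunction r - hqm.stieltjesFunction r)) := by
    rw [Monotone.stieltjesFunction_eq, Monotone.stieltjesFunction_eq]
    refine ((hpm.tendsto_rightLim r).sub (hqm.tendsto_rightLim r)).congr fun x => ?_
    simp [hpq]
  have hcont : Tendsto (f ∘ (↑) ∘ cl) (𝓝 r) (𝓝 (f r)) := by
    have := (hf.comp_continuous (continuous_subtype_val.comp continuous_projIcc)
      fun x => (cl x).2).tendsto r
    rwa [Function.comp_apply, Function.comp_apply, projIcc_of_mem hT hr] at this
  exact tendsto_nhds_unique (hcont.mono_left nhdsWithin_le_nhds) hlim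

theorem exists_isLSIntegral_tendsto_sum {T : ℝ} (hT : 0 ≤ T) {f g : ℝ → ℝ}
    (hf : ContinuousOn f (Icc 0 T)) (hfv : BoundedVariationOn f (Icc 0 T))
    {P : ℕ → Finset ℝ} (hP : ∀ n, ↑(P n) ⊆ Icc (0:ℝ) T) {c : ℕ → ℝ → ℝ} {C : ℝ}
    (hC : ∀ n, ∀ s ∈ P n, |c n s| ≤ C)
    (hg : ∀ r ∈ Ioc (0:ℝ) T, Tendsto (fun n => stepFn (P n) T (c n) r) atTop (𝓝 (g r))) :
    ∃ J, IsLSIntegral g f 0 T J ∧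
      Tendsto (fun n => ∑ s ∈ P n, c n s * (f (nextPt (P n) T s) - f s)) atTop (𝓝 J) := by
  obtain ⟨φ, ψ, hf_eq⟩ := exists_stieltjesFunction_sub_eq hT hf hfv
  have hbound : ∀ n r, |stepFn (P n) T (c n) r| ≤ max C 0 := fun n =>
    abs_stepFn_le (fun s hs => (hC n s hs).trans (le_max_left _ _)) (le_max_right _ _)
  have hconv (μ : StieltjesFunction ℝ) :=
    integrableOn_and_tendsto_setIntegral_of_bounded (μ := μ.measure) measurableSet_Ioc
      (by simp [StieltjesFunction.measure_Ioc])
      (fun n => (measurable_stepFn (c n)).aestronglyMeasurable) hbound hg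
  obtain ⟨hφg, hφ⟩ := hconv φ
  obtain ⟨hψg, hψ⟩ := hconv ψ
  have hsum : ∀ n, ∑ s ∈ P n, c n s * (f (nextPt (P n) T s) - f s) =
      (∫ r in Ioc 0 T, stepFn (P n) T (c n) r ∂φ.measure) -
        ∫ r in Ioc 0 T, stepFn (P n) T (c n) r ∂ψ.measure := fun n => by
    rw [integral_stepFn φ (hP n) hT, integral_stepFn ψ (hP n) hT, ← Finset.sum_sub_distrib]
    refine Finset.sum_congr rfl fun s hs => ?_
    rw [hf_eq _ (nextPt_mem_Icc (hP n) hT s), hf_eq s (hP n hs)]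
    ring
  refine ⟨_, ⟨φ, ψ, hf_eq, ?_, ?_, ?_⟩, (hφ.sub hψ).congr fun n => (hsum n).symm⟩
  · exact (intervalIntegrable_iff_integrableOn_Ioc_of_le hT).2 hφg
  · exact (intervalIntegrable_iff_integrableOn_Ioc_of_le hT).2 hψg
  · rw [intervalIntegral.integral_of_le hT, intervalIntegral.integral_of_le hT]

theorem tendsto_stepFn_stepStopApprox {d m : ℕ} {T : ℝ} {U : Set (Fin d → ℝ)}
    {S : Set (Fin m → ℝ)} {G : Fnl d m} (hG : LeftCont T U S G) {A : FPath m}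
    (hA : IsCBV T S A) (R : RefiningSeq T) {B : FPath d} (hB : IsCBV T U B) {r : ℝ}
    (hr : r ∈ Ioc (0:ℝ) T) :
    Tendsto (fun n => stepFn (R.part n) T (fun s => G s (stepStopApprox (R.part n) T B s) A) r)
      atTop (𝓝 (G r B A)) := by
  rw [Metric.tendsto_atTop]
  intro ε hε
  obtain ⟨η, hη, hGη⟩ := hG r hr ε hε B (isCadlag_of_continuousOn hB.1 hB.2.1) A hA
  obtain ⟨δ, hδ, hBδ⟩ := Metric.uniformContinuousOn_iff.1
    (isCompact_Icc.uniformContinuousOn_of_continuous hB.2.1) (η / 2) (half_pos hη)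
  obtain ⟨N, hN⟩ := R.mesh_to_zero (min δ η) (lt_min hδ hη)
  refine ⟨N, fun n hn => ?_⟩
  obtain ⟨s, hs, hrs⟩ := exists_mem_mem_Ioc_nextPt (R.zero_mem n) hr
  have hmesh := hN n hn s hs
  have hdist := supDist_stopped_stepStopApprox_le (R.subset_Icc n) (R.zero_mem n)
    (half_pos hη).le hBδ (fun s hs => (hN n hn s hs).trans_le (min_le_left _ _)) hs hrs hr.2
  have hclose := hGη (r - s) ⟨by linarith [hrs.1], by linarith [hrs.2, min_le_right δ η]⟩ _
    (isCadlag_stepStopApprox (R.subset_Icc n) R.nonneg hB.1 hs)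
    (by rw [sub_sub_cancel]; linarith)
  rw [sub_sub_cancel] at hclose
  rw [stepFn_eq_of_mem _ hs hrs, dist_comm, Real.dist_eq]
  exact hclose

theorem ito_integral_eq_stieltjes_on_CBV_general
    {d : ℕ} {T : ℝ} (R : RefiningSeq T)
    {U : Set (Fin d → ℝ)}
    (ξ : ℝ → FPath d → Fin d → ℝ) (hξ : AdmissibleIntegrand T U ξ)
    (B : FPath d) (hB : IsCBV T U B) :
    ∃ (I : ℝ) (J : Fin d → ℝ),
      IsItoIntegral R ξ B T I ∧
      (∀ i, IsLSIntegral (fun s => ξ s B i) (fun s => B s i) 0 T (J i)) ∧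
      I = ∑ i, J i := by
  obtain ⟨m, S, A, F, -, hA, ⟨hF, -, -⟩, hξF⟩ := hξ
  have hT := R.nonneg
  have hBK : ∀ t ∈ Icc (0:ℝ) T, B t ∈ B '' Icc 0 T := fun t ht => mem_image_of_mem B ht
  have hξY : ∀ n, ∀ s ∈ R.part n, ξ s (stepStopApprox (R.part n) T B s) =
      vertD F s (stepStopApprox (R.part n) T B s) A := fun n s hs =>
    hξF s (R.subset_Icc n hs) _ (isCadlag_stepStopApprox (R.subset_Icc n) hT hB.1 hs)
  have hcoord (i : Fin d) : ∃ J, IsLSIntegral (fun s => ξ s B i) (fun s => B s i) 0 T J ∧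
      Tendsto (fun n => ∑ s ∈ R.part n, ξ s (stepStopApprox (R.part n) T B s) i *
        (B (nextPt (R.part n) T s) i - B s i)) atTop (𝓝 J) := by
    obtain ⟨C, hC⟩ := hF.vd_bdd i A hA _ (image_subset_iff.2 hB.1)
      (isCompact_Icc.image_of_continuousOn hB.2.1)
    refine exists_isLSIntegral_tendsto_sum hT ((continuous_apply i).comp_continuousOn hB.2.1)
      (hB.2.2 i) R.subset_Icc (C := C) (fun n s hs => ?_) (fun r hr => ?_)
    · rw [hξY n s hs]
      exact hC s (R.subset_Icc n hs) _ (isCadlag_stepStopApprox (R.subset_Icc n) hT hBK hs)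
    · rw [hξF r (Ioc_subset_Icc_self hr) B (isCadlag_of_continuousOn hB.1 hB.2.1)]
      refine (tendsto_stepFn_stepStopApprox (hF.vd_leftCont i) hA R hB hr).congr fun n => ?_
      rw [stepFn_congr fun s hs => congrFun (hξY n s hs).symm i]
  choose J hJ hlim using hcoord
  refine ⟨∑ i, J i, J, ?_, hJ, rfl⟩
  have hsum (n : ℕ) : itoSum (R.part n) T ξ B T = ∑ i, ∑ s ∈ R.part n,
      ξ s (stepStopApprox (R.part n) T B s) i * (B (nextPt (R.part n) T s) i - B s i) := by
    rw [itoSum, Finset.filter_true_of_mem fun s hs => (R.subset_Icc n hs).2, Finset.sum_comm]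
  simpa only [IsItoIntegral, hsum] using tendsto_finsetSum _ fun i _ => hlim i

/-- **Lemma (Itô integral along a continuous bounded-variation path)**: for an admissible
functional integrand `ξ` and `B ∈ CBV([0,T],U)`, the pathwise Itô integral
`∫_0^T ξ(s,B) dB(s)` exists and equals the Lebesgue–Stieltjes integral of `s ↦ ξ(s,B)`
with respect to `dB(s)`. -/
theorem ito_integral_eq_stieltjes_on_CBV
    {d : ℕ} {T : ℝ} (hT : 0 < T) (R : RefiningSeq T)
    {U : Set (Fin d → ℝ)} (hU : IsOpen U)
    (ξ : ℝ → FPath d → Fin d → ℝ) (hξ : AdmissibleIntegrand T U ξ)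
    (B : FPath d) (hB : IsCBV T U B) :
    ∃ (I : ℝ) (J : Fin d → ℝ),
      IsItoIntegral R ξ B T I ∧
      (∀ i, IsLSIntegral (fun s => ξ s B i) (fun s => B s i) 0 T (J i)) ∧
      I = ∑ i, J i :=
  ito_integral_eq_stieltjes_on_CBV_general R ξ hξ B hB
end

section
/- Càdlàg regularity in time: Let F∈ℂ^{1,2}_c(U,S). Then for all X∈D([0,T],U) and A∈CBV([0,T],S), the function t↦F(t,X,A) is càdlàg on [0,T], and its left-hand limit at every t∈(0,T] is given by lim_{s↑t} F(s,X,A) = F(t, X^{t−}, A), where X^{t−} denotes the path obtained as the limit of the stopped paths X^s as s↑t (i.e., X^{t−}(u)=X(u) for u<t and X^{t−}(u)=X(t−) for u≥t). -/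
open Filter Set MeasureTheory

/-!
Right-continuity at `t`: by non-anticipativity `F(s,X,A) = F(s,X^s,A)`, and
`F(s,X^s,A) - F(t,X^t,A)` splits into a vertical part `F(s,X^s,A) - F(s,X^t,A)`, small because
`‖X^s - X^t‖_∞ → 0` as `s ↓ t` (right-continuity of `X`) and `F` is continuous in `X` locally
uniformly in time, and a horizontal part `F(s,X^t,A) - F(t,X^t,A)`, a sum of Lebesgue–Stieltjes
integrals over `(t,s]` of the horizontal derivative. The value of such an integral does not depend
on the decomposition of the integrator into monotone parts, so all of them are integrals against
one decomposition chosen on `[t,T]`, and they vanish as `s ↓ t` by absolute continuity.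

Left limit at `t`: `‖(X^{t-})^t - X^s‖_∞ → 0` as `s ↑ t` because `X(s) → X(t-)`, so
left-continuity of `F` at `(t, X^{t-}, A)` gives `F(s,X,A) → F(t,X^{t-},A)`.
-/

open Topology

/-- `X^{t-}` when `L = X(t-)`. -/
noncomputable def stoppedLeft {d : ℕ} (X : FPath d) (t : ℝ) (L : Fin d → ℝ) : FPath d :=
  fun u => if u < t then X u else L

section Paths

variable {d : ℕ} {T : ℝ} {U : Set (Fin d → ℝ)}

lemma stopped_of_le {X : FPath d} {t u : ℝ} (h : u ≤ t) : stopped X t u = X u := by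
  simp [stopped, min_eq_right h]

lemma stopped_of_ge {X : FPath d} {t u : ℝ} (h : t ≤ u) : stopped X t u = X t := by
  simp [stopped, min_eq_left h]

lemma stopped_stopped_of_le (X : FPath d) {t s : ℝ} (h : t ≤ s) :
    stopped (stopped X t) s = stopped X t := by
  funext u
  simp only [stopped, ← min_assoc, min_eq_left h]

lemma isCadlag_stopped {X : FPath d} (hX : IsCadlag T U X) {s : ℝ} (hs : s ∈ Icc 0 T) :
    IsCadlag T U (stopped X s) := by
  refine ⟨fun u hu => hX.1 _ ⟨le_min hs.1 hu.1, (min_le_left _ _).trans hs.2⟩,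
    fun u hu => ?_, fun u hu => ?_⟩
  · rcases lt_or_ge u s with h | h
    · rw [stopped_of_le h.le]
      refine (hX.2.1 u hu).congr' (eventually_nhdsWithin_of_eventually_nhds ?_)
      filter_upwards [Iio_mem_nhds h] with v hv using (stopped_of_le (le_of_lt hv)).symm
    · rw [stopped_of_ge h]
      refine tendsto_const_nhds.congr' ?_
      filter_upwards [self_mem_nhdsWithin] with v hv
      exact (stopped_of_ge (h.trans (le_of_lt hv))).symm
  · rcases le_or_gt u s with h | h
    · obtain ⟨L, hLU, hL⟩ := hX.2.2 u hu
      refine ⟨L, hLU, hL.congr' ?_⟩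
      filter_upwards [self_mem_nhdsWithin] with v hv
      exact (stopped_of_le ((le_of_lt hv).trans h)).symm
    · refine ⟨X s, hX.1 s hs, tendsto_const_nhds.congr' (eventually_nhdsWithin_of_eventually_nhds ?_)⟩
      filter_upwards [Ioi_mem_nhds h] with v hv using (stopped_of_ge (le_of_lt hv)).symm

lemma stoppedLeft_of_lt {X : FPath d} {t u : ℝ} {L : Fin d → ℝ} (h : u < t) :
    stoppedLeft X t L u = X u :=
  if_pos h

lemma stoppedLeft_of_ge {X : FPath d} {t u : ℝ} {L : Fin d → ℝ} (h : t ≤ u) :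
    stoppedLeft X t L u = L :=
  if_neg (not_lt.2 h)

lemma stopped_stoppedLeft (X : FPath d) (t : ℝ) (L : Fin d → ℝ) :
    stopped (stoppedLeft X t L) t = stoppedLeft X t L := by
  funext u
  rcases le_or_gt t u with h | h
  · rw [stopped_of_ge h, stoppedLeft_of_ge le_rfl, stoppedLeft_of_ge h]
  · exact stopped_of_le h.le

lemma isCadlag_stoppedLeft {X : FPath d} (hX : IsCadlag T U X) {t : ℝ} {L : Fin d → ℝ}
    (hL : L ∈ U) : IsCadlag T U (stoppedLeft X t L) := by
  refine ⟨fun u hu => ?_, fun u hu => ?_, fun u hu => ?_⟩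
  · rcases lt_or_ge u t with h | h
    · rw [stoppedLeft_of_lt h]; exact hX.1 u hu
    · rwa [stoppedLeft_of_ge h]
  · rcases lt_or_ge u t with h | h
    · rw [stoppedLeft_of_lt h]
      refine (hX.2.1 u hu).congr' (eventually_nhdsWithin_of_eventually_nhds ?_)
      filter_upwards [Iio_mem_nhds h] with v hv using (stoppedLeft_of_lt hv).symm
    · rw [stoppedLeft_of_ge h]
      refine tendsto_const_nhds.congr' ?_
      filter_upwards [self_mem_nhdsWithin] with v hv
      exact (stoppedLeft_of_ge (h.trans (le_of_lt hv))).symm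
  · rcases le_or_gt u t with h | h
    · obtain ⟨L', hL'U, hL'⟩ := hX.2.2 u hu
      refine ⟨L', hL'U, hL'.congr' ?_⟩
      filter_upwards [self_mem_nhdsWithin] with v hv
      exact (stoppedLeft_of_lt (lt_of_lt_of_le hv h)).symm
    · refine ⟨L, hL, tendsto_const_nhds.congr' (eventually_nhdsWithin_of_eventually_nhds ?_)⟩
      filter_upwards [Ioi_mem_nhds h] with v hv using (stoppedLeft_of_ge (le_of_lt hv)).symm

lemma supDist_nonneg (X Y : FPath d) : 0 ≤ supDist T X Y :=
  Real.iSup_nonneg fun _ => norm_nonneg _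

lemma supDist_le {X Y : FPath d} {c : ℝ} (hc : 0 ≤ c)
    (h : ∀ u ∈ Icc 0 T, ‖X u - Y u‖ ≤ c) : supDist T X Y ≤ c :=
  Real.iSup_le (fun u => h u.1 u.2) hc

lemma tendsto_supDist_zero {ι : Type*} {l : Filter ι} {X Y : ι → FPath d}
    (h : ∀ ε > 0, ∀ᶠ i in l, ∀ u, ‖X i u - Y i u‖ ≤ ε) :
    Tendsto (fun i => supDist T (X i) (Y i)) l (𝓝 0) := by
  refine tendsto_order.2 ⟨fun a ha => .of_forall fun i => ha.trans_le (supDist_nonneg _ _),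
    fun a ha => ?_⟩
  filter_upwards [h (a / 2) (half_pos ha)] with i hi
  exact (supDist_le (half_pos ha).le fun u _ => hi u).trans_lt (half_lt_self ha)

lemma tendsto_supDist_stopped_nhdsGT {X : FPath d} {t : ℝ}
    (hX : Tendsto X (𝓝[>] t) (𝓝 (X t))) :
    Tendsto (fun s => supDist T (stopped X t) (stopped X s)) (𝓝[>] t) (𝓝 0) := by
  refine tendsto_supDist_zero fun ε hε => ?_
  obtain ⟨b, hb, hXb⟩ :=
    mem_nhdsGT_iff_exists_Ioo_subset.1 (hX (Metric.closedBall_mem_nhds (X t) hε))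
  filter_upwards [Ioo_mem_nhdsGT hb] with s hs u
  rcases le_or_gt u t with h | h
  · rw [stopped_of_le h, stopped_of_le (h.trans hs.1.le), sub_self, norm_zero]
    exact hε.le
  · rw [stopped_of_ge h.le, norm_sub_rev, ← dist_eq_norm]
    exact hXb ⟨lt_min hs.1 h, (min_le_left _ _).trans_lt hs.2⟩

lemma tendsto_supDist_stoppedLeft_nhdsLT {X : FPath d} {t : ℝ} {L : Fin d → ℝ}
    (hL : Tendsto X (𝓝[<] t) (𝓝 L)) :
    Tendsto (fun s => supDist T (stoppedLeft X t L) (stopped X s)) (𝓝[<] t) (𝓝 0) := by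
  refine tendsto_supDist_zero fun ε hε => ?_
  obtain ⟨b, hb, hXb⟩ :=
    mem_nhdsLT_iff_exists_Ioo_subset.1 (hL (Metric.closedBall_mem_nhds L (half_pos hε)))
  filter_upwards [Ioo_mem_nhdsLT hb] with s hs u
  have hclose : ∀ r ∈ Ico s t, ‖X r - L‖ ≤ ε / 2 := fun r hr =>
    (dist_eq_norm (X r) L).symm.trans_le (hXb ⟨hs.1.trans_le hr.1, hr.2⟩)
  have hs' : ‖L - X s‖ ≤ ε / 2 := by
    rw [norm_sub_rev]; exact hclose s ⟨le_rfl, hs.2⟩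
  rcases le_or_gt u s with hus | hsu
  · rw [stoppedLeft_of_lt (hus.trans_lt hs.2), stopped_of_le hus, sub_self, norm_zero]
    exact hε.le
  rw [stopped_of_ge hsu.le]
  rcases lt_or_ge u t with hut | htu
  · rw [stoppedLeft_of_lt hut]
    calc ‖X u - X s‖ ≤ ‖X u - L‖ + ‖L - X s‖ := norm_sub_le_norm_sub_add_norm_sub _ _ _
      _ ≤ ε / 2 + ε / 2 := add_le_add (hclose u ⟨hsu.le, hut⟩) hs'
      _ = ε := add_halves ε
  · rw [stoppedLeft_of_ge htu]
    linarith

end Paths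

section Stieltjes

lemma StieltjesFunction.measure_restrict_Ioc_eq {f g : StieltjesFunction ℝ} {a b : ℝ}
    (h : ∀ r ∈ Icc a b, f r - g r = f a - g a) :
    f.measure.restrict (Ioc a b) = g.measure.restrict (Ioc a b) := by
  refine Measure.ext_of_Ioc _ _ fun c e _ => ?_
  rw [Measure.restrict_apply measurableSet_Ioc, Measure.restrict_apply measurableSet_Ioc,
    Ioc_inter_Ioc]
  rcases lt_or_ge (c ⊔ a) (e ⊓ b) with hlt | hge
  · have hx : c ⊔ a ∈ Icc a b := ⟨le_sup_right, hlt.le.trans inf_le_right⟩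
    have hy : e ⊓ b ∈ Icc a b := ⟨le_sup_right.trans hlt.le, inf_le_right⟩
    rw [f.measure_Ioc, g.measure_Ioc]
    congr 1
    linarith [h _ hx, h _ hy]
  · rw [Ioc_eq_empty (not_lt.2 hge), measure_empty, measure_empty]

lemma StieltjesFunction.tendsto_measure_Ioc_nhdsGT (f : StieltjesFunction ℝ) (a : ℝ) :
    Tendsto (fun s => f.measure (Ioc a s)) (𝓝[>] a) (𝓝 0) := by
  simp_rw [f.measure_Ioc]
  rw [← ENNReal.ofReal_zero]
  refine ENNReal.tendsto_ofReal ?_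
  have hf := ((f.right_continuous a).tendsto.mono_left
    (nhdsWithin_mono _ Ioi_subset_Ici_self)).sub_const (f a)
  rwa [sub_self] at hf

lemma IntervalIntegrable.tendsto_integral_stieltjes_nhdsGT {g : ℝ → ℝ}
    {f : StieltjesFunction ℝ} {a b : ℝ} (hab : a < b) (hg : IntervalIntegrable g f.measure a b) :
    Tendsto (fun s => ∫ r in a..s, g r ∂f.measure) (𝓝[>] a) (𝓝 0) := by
  have hsmall : Tendsto (fun s => f.measure.restrict (Ioc a b) (Ioc a s)) (𝓝[>] a) (𝓝 0) :=
    tendsto_of_tendsto_of_tendsto_of_le_of_le tendsto_const_nhds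
      (f.tendsto_measure_Ioc_nhdsGT a) (fun _ => zero_le)
      (fun _ => Measure.restrict_apply_le _ _)
  refine (hg.1.tendsto_setIntegral_nhds_zero hsmall).congr' ?_
  filter_upwards [Ioc_mem_nhdsGT hab] with s hs
  rw [intervalIntegral.integral_of_le hs.1.le, Measure.restrict_restrict measurableSet_Ioc,
    inter_eq_left.2 (Ioc_subset_Ioc_right hs.2)]

variable {g A : ℝ → ℝ}

/-- Two decompositions `A = P - N = P' - N'` have `P + N' - (P' + N)` constant on `[a,b]`,
hence `P + N'` and `P' + N` define the same measure on `(a,b]`. -/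
lemma IsLSIntegral.unique {a b I J : ℝ} (hab : a ≤ b) (hI : IsLSIntegral g A a b I)
    (hJ : IsLSIntegral g A a b J) : I = J := by
  obtain ⟨P, N, hPN, hP, hN, rfl⟩ := hI
  obtain ⟨P', N', hPN', hP', hN', rfl⟩ := hJ
  have ha : a ∈ Icc a b := ⟨le_rfl, hab⟩
  have hμ : (P + N').measure.restrict (Ioc a b) = (P' + N).measure.restrict (Ioc a b) :=
    StieltjesFunction.measure_restrict_Ioc_eq fun r hr => by
      simp only [StieltjesFunction.add_apply]
      linarith [hPN r hr, hPN' r hr, hPN a ha, hPN' a ha]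
  have hsum : (∫ r in a..b, g r ∂P.measure) + ∫ r in a..b, g r ∂N'.measure
      = (∫ r in a..b, g r ∂P'.measure) + ∫ r in a..b, g r ∂N.measure := by
    simp only [intervalIntegral.integral_of_le hab]
    rw [← integral_add_measure hP.1 hN'.1, ← integral_add_measure hP'.1 hN.1,
      ← Measure.restrict_add, ← Measure.restrict_add, ← StieltjesFunction.measure_add,
      ← StieltjesFunction.measure_add, hμ]
  linarith

lemma IsLSIntegral.tendsto_nhdsGT {a b I : ℝ} (hab : a < b) (h : IsLSIntegral g A a b I)
    {J : ℝ → ℝ} (hJ : ∀ s ∈ Ioc a b, IsLSIntegral g A a s (J s)) :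
    Tendsto J (𝓝[>] a) (𝓝 0) := by
  obtain ⟨P, N, hPN, hP, hN, -⟩ := h
  have hJ_eq : ∀ s ∈ Ioc a b,
      (∫ r in a..s, g r ∂P.measure) - ∫ r in a..s, g r ∂N.measure = J s := by
    intro s hs
    have hsub : uIcc a s ⊆ uIcc a b :=
      uIcc_subset_uIcc_left (by rw [uIcc_of_le hab.le]; exact Ioc_subset_Icc_self hs)
    exact IsLSIntegral.unique hs.1.le
      ⟨P, N, fun r hr => hPN r ⟨hr.1, hr.2.trans hs.2⟩, hP.mono_set hsub, hN.mono_set hsub, rfl⟩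
      (hJ s hs)
  have hlim := (hP.tendsto_integral_stieltjes_nhdsGT hab).sub
    (hN.tendsto_integral_stieltjes_nhdsGT hab)
  rw [sub_zero] at hlim
  refine hlim.congr' ?_
  filter_upwards [Ioc_mem_nhdsGT hab] with s hs using hJ_eq s hs

end Stieltjes

section Functionals

variable {d m : ℕ} {T : ℝ} {U : Set (Fin d → ℝ)} {S : Set (Fin m → ℝ)} {F : Fnl d m}
  {X : FPath d} {A : FPath m} {t : ℝ}

lemma NonAnticipative.apply_stopped_self (hF : NonAnticipative T U S F) (ht : t ∈ Icc 0 T)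
    (hX : IsCadlag T U X) (hA : IsCBV T S A) : F t (stopped X t) A = F t X A := by
  rw [hF t ht X hX A hA, hF t ht _ (isCadlag_stopped hX ht) A hA,
    stopped_stopped_of_le X le_rfl]

lemma ContInXLocUnifT.tendsto_sub (hF : ContInXLocUnifT T U S F) (ht : t ∈ Icc 0 T)
    (hX : IsCadlag T U X) (hA : IsCBV T S A) {l : Filter ℝ} (hl : l ≤ 𝓝 t)
    (hlT : ∀ᶠ s in l, s ∈ Icc 0 T) {Y : ℝ → FPath d} (hY : ∀ᶠ s in l, IsCadlag T U (Y s))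
    (hXY : Tendsto (fun s => supDist T X (Y s)) l (𝓝 0)) :
    Tendsto (fun s => F s X A - F s (Y s) A) l (𝓝 0) := by
  rw [Metric.tendsto_nhds]
  intro ε hε
  obtain ⟨η, hη, hFη⟩ := hF ε hε t ht X hX A hA
  filter_upwards [hlT, hY, hXY.eventually (gt_mem_nhds hη), hl (Metric.ball_mem_nhds t hη)]
    with s hsT hYs hXYs hts
  rw [dist_zero_right, Real.norm_eq_abs]
  exact hFη s hsT (Y s) hYs hXYs (by rwa [abs_sub_comm, ← Real.dist_eq])

lemma LeftCont.tendsto_nhdsLT (hF : LeftCont T U S F) (ht : t ∈ Ioc 0 T)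
    (hX : IsCadlag T U X) (hA : IsCBV T S A) {Y : FPath d} (hY : IsCadlag T U Y)
    (hXY : Tendsto (fun s => supDist T (stopped X t) (stopped Y s)) (𝓝[<] t) (𝓝 0)) :
    Tendsto (fun s => F s Y A) (𝓝[<] t) (𝓝 (F t X A)) := by
  rw [Metric.tendsto_nhds]
  intro ε hε
  obtain ⟨η, hη, hFη⟩ := hF t ht ε hε X hX A hA
  filter_upwards [hXY.eventually (gt_mem_nhds hη), Ioo_mem_nhdsLT (sub_lt_self t hη)]
    with s hXYs hs
  have hclose := hFη (t - s) ⟨by linarith [hs.2], by linarith [hs.1]⟩ Y hY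
    (by rwa [sub_sub_cancel])
  rw [sub_sub_cancel] at hclose
  rwa [Real.dist_eq, abs_sub_comm]

lemma HasHorizDeriv.tendsto_nhdsGT {HD : Fin (m + 1) → Fnl d m}
    (hF : HasHorizDeriv T U S F HD) (ht : t ∈ Ico 0 T) (hX : IsCadlag T U X)
    (hA : IsCBV T S A) :
    Tendsto (fun s => F s (stopped X t) A) (𝓝[>] t) (𝓝 (F t (stopped X t) A)) := by
  obtain ⟨I, hI, _⟩ := (hF.2.2 t T ht.1 ht.2 le_rfl X hX A hA).2
  have hinc : ∀ s ∈ Ioc t T, ∃ J : Fin (m + 1) → ℝ,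
      (∀ i, IsLSIntegral (fun r => HD i r (stopped X t) A) (fun r => timeAug A r i) t s (J i)) ∧
      F s (stopped X t) A - F t (stopped X t) A = ∑ i, J i :=
    fun s hs => (hF.2.2 t s ht.1 hs.1 hs.2 X hX A hA).2
  choose! J hJ hFJ using hinc
  have hsum : Tendsto (fun s => ∑ i, J s i) (𝓝[>] t) (𝓝 0) := by
    simpa using tendsto_finsetSum Finset.univ fun i _ =>
      (hI i).tendsto_nhdsGT ht.2 fun s hs => hJ s hs i
  rw [← tendsto_sub_nhds_zero_iff]
  refine hsum.congr' ?_
  filter_upwards [Ioc_mem_nhdsGT ht.2] with s hs using (hFJ s hs).symm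

end Functionals

theorem cadlag_in_time_general
    {d m : ℕ} {T : ℝ}
    {U : Set (Fin d → ℝ)} {S : Set (Fin m → ℝ)}
    (F : Fnl d m) (hF : C12c T U S F)
    (X : FPath d) (hX : IsCadlag T U X) (A : FPath m) (hA : IsCBV T S A) :
    (∀ t ∈ Set.Ico (0:ℝ) T,
      Tendsto (fun s => F s X A) (nhdsWithin t (Set.Ioi t)) (nhds (F t X A))) ∧
    (∀ t ∈ Set.Ioc (0:ℝ) T,
      Tendsto (fun s => F s X A) (nhdsWithin t (Set.Iio t))
        (nhds (F t (fun u => if u < t then X u else Function.leftLim X t) A))) := by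
  obtain ⟨hFb, hFcont, -⟩ := hF
  refine ⟨fun t ht => ?_, fun t ht => ?_⟩
  · have htT : t ∈ Icc 0 T := Ico_subset_Icc_self ht
    have hnear : ∀ᶠ s in 𝓝[>] t, s ∈ Icc 0 T := by
      filter_upwards [Ioc_mem_nhdsGT ht.2] with s hs using ⟨ht.1.trans hs.1.le, hs.2⟩
    obtain ⟨HD, hHD, -⟩ := hFb.horiz
    have horiz := hHD.tendsto_nhdsGT ht hX hA
    have vert := hFcont.tendsto_sub htT (isCadlag_stopped hX htT) hA nhdsWithin_le_nhds hnear
      (hnear.mono fun s hs => isCadlag_stopped hX hs) (tendsto_supDist_stopped_nhdsGT (hX.2.1 t ht))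
    have hlim := horiz.sub vert
    rw [sub_zero, hFb.nonanticip.apply_stopped_self htT hX hA] at hlim
    refine hlim.congr' ?_
    filter_upwards [hnear] with s hs
    rw [sub_sub_cancel, hFb.nonanticip.apply_stopped_self hs hX hA]
  · obtain ⟨L, hLU, hL⟩ := hX.2.2 t ht
    rw [leftLim_eq_of_tendsto hL]
    refine hFb.leftCont.tendsto_nhdsLT ht (isCadlag_stoppedLeft hX hLU) hA hX ?_
    rw [stopped_stoppedLeft]
    exact tendsto_supDist_stoppedLeft_nhdsLT hL

/-- **Lemma 3.2 (b)**: for `F ∈ ℂ^{1,2}_c(U,S)`, `X ∈ D([0,T],U)` and `A ∈ CBV([0,T],S)`,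
the function `t ↦ F(t,X,A)` is càdlàg, and its left-hand limit at `t ∈ (0,T]` is
`F(t, X^{t−}, A)`, where `X^{t−}(u) = X(u)` for `u < t` and `X^{t−}(u) = X(t−)` for `u ≥ t`. -/
theorem cadlag_in_time
    {d m : ℕ} {T : ℝ} (hT : 0 < T)
    {U : Set (Fin d → ℝ)} (hU : IsOpen U) {S : Set (Fin m → ℝ)} (hS : IsOpen S)
    (F : Fnl d m) (hF : C12c T U S F)
    (X : FPath d) (hX : IsCadlag T U X) (A : FPath m) (hA : IsCBV T S A) :
    (∀ t ∈ Set.Ico (0:ℝ) T,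
      Tendsto (fun s => F s X A) (nhdsWithin t (Set.Ioi t)) (nhds (F t X A))) ∧
    (∀ t ∈ Set.Ioc (0:ℝ) T,
      Tendsto (fun s => F s X A) (nhdsWithin t (Set.Iio t))
        (nhds (F t (fun u => if u < t then X u else Function.leftLim X t) A))) :=
  cadlag_in_time_general F hF X hX A hA
end

section
/- Symmetry of second vertical derivatives: Let F∈ℂ^{1,2}_b(U,S). Then for every (t,X,A)∈[0,T]×D([0,T],U)×CBV([0,T],S) and all i,j=1,…,d, the second vertical partial derivatives are symmetric: ∂_{ij}F(t,X,A) = ∂_{ji}F(t,X,A). -/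
open Filter Set MeasureTheory

/-!
Fix `t`, `X`, `A` and put `f v = F(t, X + v·1_{[t,T]}, A)` on `ℝ^d`. Vertical perturbations
compose additively, so the vertical derivative of `F` at the perturbed path `X + w·1_{[t,T]}` is
the gradient of `f` at `w`, and `∂_{ij}F(t,X,A)` is the second partial derivative `∂_i∂_j f(0)`.
Since the closure of the range of a càdlàg path is a compact subset of the open set `U`, the
perturbed paths remain in `D([0,T],U)` for all small `w`; hence `f` is differentiable near `0`
and its gradient is differentiable at `0`, and the second derivative of such a function is
symmetric.
-/

open Topology

section Calculus

variable {𝕜 E F : Type*} [NontriviallyNormedField 𝕜] [NormedAddCommGroup E] [NormedSpace 𝕜 E]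
  [NormedAddCommGroup F] [NormedSpace 𝕜 F]

theorem differentiableAt_of_forall_apply_single [CompleteSpace 𝕜] {ι : Type*} [Fintype ι]
    [DecidableEq ι] {g : E → (ι → 𝕜) →L[𝕜] F} {x : E}
    (hg : ∀ k, DifferentiableAt 𝕜 (fun y => g y (Pi.single k 1)) x) :
    DifferentiableAt 𝕜 g x := by
  have hcoord : DifferentiableAt 𝕜 (ContinuousLinearEquiv.piRing (𝕜 := 𝕜) (E := F) ι ∘ g) x :=
    differentiableAt_pi.2 hg
  exact (ContinuousLinearEquiv.piRing ι).comp_differentiableAt_iff.1 hcoord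

theorem fderiv_fderiv_apply_comm_of_eventually [IsRCLikeNormedField 𝕜] {f : E → F} {x : E}
    (hf : ∀ᶠ y in 𝓝 x, DifferentiableAt 𝕜 f y) (hf' : DifferentiableAt 𝕜 (fderiv 𝕜 f) x)
    (v w : E) :
    fderiv 𝕜 (fun y => fderiv 𝕜 f y w) x v = fderiv 𝕜 (fun y => fderiv 𝕜 f y v) x w := by
  rw [fderiv_clm_apply hf' (differentiableAt_const w),
    fderiv_clm_apply hf' (differentiableAt_const v)]
  simpa using second_derivative_symmetric_of_eventually
    (hf.mono fun y hy => hy.hasFDerivAt) hf'.hasFDerivAt v w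

end Calculus

theorem Filter.Tendsto.exists_strictMono_tendsto_nhdsWithin {α : Type*} [TopologicalSpace α]
    {x : ℕ → α} {a : α} {s : Set α} (hx : Tendsto x atTop (𝓝 a))
    (hs : ∃ᶠ n in atTop, x n ∈ s) :
    ∃ φ : ℕ → ℕ, StrictMono φ ∧ Tendsto (x ∘ φ) atTop (𝓝[s] a) := by
  obtain ⟨φ, hφ, hmem⟩ := extraction_of_frequently_atTop hs
  exact ⟨φ, hφ, tendsto_nhdsWithin_iff.2 ⟨hx.comp hφ.tendsto_atTop, .of_forall hmem⟩⟩

theorem mem_closure_image_Icc_of_tendsto_nhdsLT {α : Type*} [TopologicalSpace α] {X : ℝ → α}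
    {a b s : ℝ} (hs : s ∈ Ioc a b) {L : α} (hL : Tendsto X (𝓝[<] s) (𝓝 L)) :
    L ∈ closure (X '' Icc a b) := by
  refine mem_closure_of_tendsto hL ?_
  filter_upwards [self_mem_nhdsWithin, mem_nhdsWithin_of_mem_nhds (Ioi_mem_nhds hs.1)]
    with r hr hr₀
  exact mem_image_of_mem X ⟨le_of_lt hr₀, (le_of_lt hr).trans hs.2⟩

namespace IsCadlag

variable {d : ℕ} {T : ℝ} {U : Set (Fin d → ℝ)} {X : FPath d}

theorem exists_strictMono_tendsto (hX : IsCadlag T U X) {u : ℕ → ℝ}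
    (hu : ∀ n, u n ∈ Icc 0 T) :
    ∃ q ∈ U, ∃ φ : ℕ → ℕ, StrictMono φ ∧ Tendsto (X ∘ u ∘ φ) atTop (𝓝 q) := by
  obtain ⟨t₀, ht₀, ψ, hψ, hlim⟩ := isCompact_Icc.tendsto_subseq hu
  by_cases hleft : ∃ᶠ n in atTop, u (ψ n) ∈ Iio t₀
  · obtain ⟨ρ, hρ, hρlim⟩ := hlim.exists_strictMono_tendsto_nhdsWithin hleft
    obtain ⟨n, hn⟩ := hleft.exists
    obtain ⟨L, hLU, hL⟩ := hX.2.2 t₀ ⟨(hu _).1.trans_lt hn, ht₀.2⟩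
    exact ⟨L, hLU, ψ ∘ ρ, hψ.comp hρ, hL.comp hρlim⟩
  by_cases hright : ∃ᶠ n in atTop, u (ψ n) ∈ Ioi t₀
  · obtain ⟨ρ, hρ, hρlim⟩ := hlim.exists_strictMono_tendsto_nhdsWithin hright
    obtain ⟨n, hn⟩ := hright.exists
    exact ⟨X t₀, hX.1 t₀ ht₀, ψ ∘ ρ, hψ.comp hρ,
      (hX.2.1 t₀ ⟨ht₀.1, hn.trans_le (hu _).2⟩).comp hρlim⟩
  have heq : ∀ᶠ n in atTop, u (ψ n) = t₀ := by
    filter_upwards [not_frequently.1 hleft, not_frequently.1 hright] with n h₁ h₂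
    exact le_antisymm (not_lt.1 h₂) (not_lt.1 h₁)
  refine ⟨X t₀, hX.1 t₀ ht₀, ψ, hψ, tendsto_const_nhds.congr' ?_⟩
  filter_upwards [heq] with n hn
  simp [hn]

theorem closure_image_subset (hX : IsCadlag T U X) : closure (X '' Icc 0 T) ⊆ U := by
  intro p hp
  obtain ⟨x, hxmem, hxlim⟩ := mem_closure_iff_seq_limit.1 hp
  choose u hu hux using hxmem
  obtain ⟨q, hqU, φ, hφ, hq⟩ := hX.exists_strictMono_tendsto hu
  have hxq : Tendsto (x ∘ φ) atTop (𝓝 q) := by simpa [Function.comp_def, hux] using hq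
  rwa [tendsto_nhds_unique (hxlim.comp hφ.tendsto_atTop) hxq]

theorem isBounded_image (hX : IsCadlag T U X) : Bornology.IsBounded (X '' Icc 0 T) := by
  by_contra hunb
  simp only [isBounded_iff_forall_norm_le, forall_mem_image, not_exists, not_forall, not_le,
    exists_prop] at hunb
  choose u hu hun using fun n : ℕ => hunb n
  obtain ⟨q, -, φ, hφ, hq⟩ := hX.exists_strictMono_tendsto hu
  refine not_tendsto_nhds_of_tendsto_atTop ?_ ‖q‖ hq.norm
  refine tendsto_atTop_mono (fun n => ?_) (tendsto_natCast_atTop_atTop.comp hφ.tendsto_atTop)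
  exact (hun (φ n)).le

theorem isCompact_closure_image (hX : IsCadlag T U X) : IsCompact (closure (X '' Icc 0 T)) :=
  hX.isBounded_image.isCompact_closure

end IsCadlag

section VerticalPerturbation

variable {d : ℕ} {t s : ℝ} {X : FPath d} {w : Fin d → ℝ}

theorem vertPerturb_of_le (h : t ≤ s) : vertPerturb t X w s = X s + w := if_pos h

theorem vertPerturb_of_lt (h : s < t) : vertPerturb t X w s = X s := if_neg (not_le.2 h)

theorem vertPerturb_vertPerturb (v : Fin d → ℝ) :
    vertPerturb t (vertPerturb t X w) v = vertPerturb t X (w + v) := by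
  funext s
  by_cases h : t ≤ s <;> simp [vertPerturb, h, add_assoc]

theorem IsCadlag.vertPerturb {T : ℝ} {U : Set (Fin d → ℝ)} (hX : IsCadlag T U X)
    (hw : ∀ p ∈ closure (X '' Icc 0 T), p + w ∈ U) : IsCadlag T U (_root_.vertPerturb t X w) := by
  refine ⟨fun s hs => ?_, fun s hs => ?_, fun s hs => ?_⟩
  · rcases le_or_gt t s with h | h
    · rw [vertPerturb_of_le h]
      exact hw _ (subset_closure (mem_image_of_mem X hs))
    · rw [vertPerturb_of_lt h]
      exact hX.1 s hs
  · rcases le_or_gt t s with h | h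
    · rw [vertPerturb_of_le h]
      refine ((hX.2.1 s hs).add_const w).congr' ?_
      filter_upwards [self_mem_nhdsWithin] with r hr
      exact (vertPerturb_of_le (h.trans (le_of_lt hr))).symm
    · rw [vertPerturb_of_lt h]
      refine (hX.2.1 s hs).congr' ?_
      filter_upwards [mem_nhdsWithin_of_mem_nhds (Iio_mem_nhds h)] with r hr
      exact (vertPerturb_of_lt hr).symm
  · obtain ⟨L, hLU, hL⟩ := hX.2.2 s hs
    rcases lt_or_ge t s with h | h
    · refine ⟨L + w, hw L (mem_closure_image_Icc_of_tendsto_nhdsLT hs hL),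
        (hL.add_const w).congr' ?_⟩
      filter_upwards [mem_nhdsWithin_of_mem_nhds (Ioi_mem_nhds h)] with r hr
      exact (vertPerturb_of_le (le_of_lt hr)).symm
    · refine ⟨L, hLU, hL.congr' ?_⟩
      filter_upwards [self_mem_nhdsWithin] with r hr
      exact (vertPerturb_of_lt (lt_of_lt_of_le hr h)).symm

theorem IsCadlag.eventually_isCadlag_vertPerturb {T : ℝ} {U : Set (Fin d → ℝ)} (hU : IsOpen U)
    (hX : IsCadlag T U X) (t : ℝ) : ∀ᶠ w in 𝓝 0, IsCadlag T U (_root_.vertPerturb t X w) := by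
  obtain ⟨δ, hδ, hδU⟩ :=
    hX.isCompact_closure_image.exists_thickening_subset_open hU hX.closure_image_subset
  filter_upwards [Metric.ball_mem_nhds 0 hδ] with w hw
  refine hX.vertPerturb fun p hp => hδU (Metric.mem_thickening_iff.2 ⟨p, hp, ?_⟩)
  simpa using hw

variable {m : ℕ} {F : Fnl d m} {A : FPath m}

theorem vertDiffAt_vertPerturb_iff :
    VertDiffAt F t (vertPerturb t X w) A ↔
      DifferentiableAt ℝ (fun v => F t (vertPerturb t X v) A) w := by
  simp only [VertDiffAt, vertPerturb_vertPerturb]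
  simpa using differentiableAt_comp_add_left (f := fun v => F t (vertPerturb t X v) A)
    (x := (0 : Fin d → ℝ)) w

theorem vertD_vertPerturb (k : Fin d) :
    vertD F t (vertPerturb t X w) A k =
      fderiv ℝ (fun v => F t (vertPerturb t X v) A) w (Pi.single k 1) := by
  simp only [vertD, vertPerturb_vertPerturb]
  have hshift := fderiv_comp_add_left (𝕜 := ℝ) (f := fun v => F t (vertPerturb t X v) A)
    (x := (0 : Fin d → ℝ)) w
  rw [add_zero] at hshift
  exact congrArg (· (Pi.single k 1)) hshift

end VerticalPerturbation

theorem vertD2_symm_general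
    {d m : ℕ} {T : ℝ}
    {U : Set (Fin d → ℝ)} (hU : IsOpen U) {S : Set (Fin m → ℝ)}
    (F : Fnl d m) (hF : C12b T U S F)
    (t : ℝ) (ht : t ∈ Set.Icc (0:ℝ) T)
    (X : FPath d) (hX : IsCadlag T U X) (A : FPath m) (hA : IsCBV T S A)
    (i j : Fin d) :
    vertD2 F t X A i j = vertD2 F t X A j i := by
  set f : (Fin d → ℝ) → ℝ := fun v => F t (vertPerturb t X v) A
  have hf : ∀ᶠ w in 𝓝 0, DifferentiableAt ℝ f w :=
    (hX.eventually_isCadlag_vertPerturb hU t).mono fun w hw =>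
      vertDiffAt_vertPerturb_iff.1 (hF.vdiff t ht _ hw A hA)
  have hf' : DifferentiableAt ℝ (fderiv ℝ f) 0 :=
    differentiableAt_of_forall_apply_single fun k => by
      simpa only [VertDiffAt, vertD_vertPerturb] using hF.vdiff2 k t ht X hX A hA
  have hvertD2 : ∀ a b, vertD2 F t X A a b =
      fderiv ℝ (fun w => fderiv ℝ f w (Pi.single b 1)) 0 (Pi.single a 1) := by
    intro a b
    rw [vertD2, vertD]
    simp only [vertD_vertPerturb, f]
  rw [hvertD2, hvertD2]
  exact fderiv_fderiv_apply_comm_of_eventually hf hf' _ _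

/-- **Symmetry of second vertical derivatives** (Remark 2.3): for `F ∈ ℂ^{1,2}_b(U,S)`,
`∂_{ij}F(t,X,A) = ∂_{ji}F(t,X,A)`. -/
theorem vertD2_symm
    {d m : ℕ} {T : ℝ} (hT : 0 < T)
    {U : Set (Fin d → ℝ)} (hU : IsOpen U) {S : Set (Fin m → ℝ)} (hS : IsOpen S)
    (F : Fnl d m) (hF : C12b T U S F)
    (t : ℝ) (ht : t ∈ Set.Icc (0:ℝ) T)
    (X : FPath d) (hX : IsCadlag T U X) (A : FPath m) (hA : IsCBV T S A)
    (i j : Fin d) :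
    vertD2 F t X A i j = vertD2 F t X A j i :=
  vertD2_symm_general hU F hF t ht X hX A hA i j
end
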